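/- arXiv:math/0211075 — 3 statements merged into one kernel-verified Lean document; each statement's English description precedes it below -/
import Mathlib

section
/- For every integer n ≥ 1 and real t > 0, the rational function R_n(t) = (n!/(t(t+1)⋯(t+n)))² has partial fraction decomposition R_n(t) = Σ_{k=0}^n [ C(n,k)²/(t+k)² + 2·C(n,k)²·(H_k − H_{n−k})/(t+k) ], where H_j is the j-th harmonic number (H_0 = 0). -/
/-!
Put `F(t) = n! / ∏_{i ≤ n} (t + i) = ∑_k a_k / (t + k)` with `a_k = (-1)^k C(n,k)`. Squaring, and
splitting `1 / ((t + j)(t + k))` into simple fractions for `j ≠ k`, the coefficient of `1 / (t + k)`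
in `F²` is `2 a_k c_k` with `c_k = ∑_{j ≠ k} a_j / (j - k)`. Now `c_k` is the derivative at `-k`
of `(t + k) F(t) = n! / ∏_{i ≠ k} (t + i)`, i.e. its value `a_k` times its logarithmic derivative
`-∑_{i ≠ k} 1 / (i - k) = H_k - H_{n-k}`.
-/

open Finset Filter Topology

theorem factorial_div_prod_add_eq_sum {K : Type*} [Field K] (n : ℕ) {x : K}
    (hx : ∀ i ∈ range (n + 1), x + i ≠ 0) :
    (n.factorial : K) / ∏ i ∈ range (n + 1), (x + i)
      = ∑ j ∈ range (n + 1), (-1) ^ j * n.choose j / (x + j) := by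
  induction n generalizing x with
  | zero => simp
  | succ n ih =>
    have hx₁ : ∀ i ∈ range (n + 1), x + 1 + i ≠ 0 := fun i hi => by
      simpa [add_assoc, add_comm (1 : K)] using hx (i + 1) (by simpa using hi)
    have hxn : x + (n + 1) ≠ 0 := by simpa using hx (n + 1) (by simp)
    have hx0 : x ≠ 0 := by simpa using hx 0 (by simp)
    have hlast : ∏ i ∈ range (n + 2), (x + i) = (∏ i ∈ range (n + 1), (x + i)) * (x + (n + 1)) := by
      rw [prod_range_succ]; push_cast; rfl
    have hfirst : ∏ i ∈ range (n + 2), (x + i) = (∏ i ∈ range (n + 1), (x + 1 + i)) * x := by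
      rw [prod_range_succ']; simp [add_assoc, add_comm (1 : K)]
    -- `(n + 1) / (x (x + n + 1)) = 1 / x - 1 / (x + n + 1)`
    have hsplit : (↑(n + 1).factorial : K) / ∏ i ∈ range (n + 2), (x + i)
        = n.factorial / ∏ i ∈ range (n + 1), (x + i)
          - n.factorial / ∏ i ∈ range (n + 1), (x + 1 + i) := by
      rw [← mul_div_mul_right (n.factorial : K) _ hxn, ← mul_div_mul_right (n.factorial : K) _ hx0,
        ← hlast, ← hfirst, Nat.factorial_succ]
      push_cast; ring
    rw [hsplit, ih (fun i hi => hx i (by simp at hi ⊢; omega)), ih hx₁,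
      show ∑ j ∈ range (n + 1 + 1), (-1) ^ j * ((n + 1).choose j : K) / (x + j)
        = ∑ j ∈ range (n + 2), ((n + 1).choose j : K) * ((-1 : K) ^ j / (x + j))
        from sum_congr rfl fun _ _ => by ring,
      sum_choose_succ_mul (fun i _ => (-1 : K) ^ i / (x + i)), sub_eq_add_neg, ← sum_neg_distrib]
    congr 1 <;> refine sum_congr rfl fun j _ => ?_ <;> push_cast <;> ring

theorem sq_sum_div_add_eq {K ι : Type*} [Field K] [DecidableEq ι] {s : Finset ι} {u : ι → K}
    (hu : Set.InjOn u s) (a : ι → K) {x : K} (hx : ∀ j ∈ s, x + u j ≠ 0) :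
    (∑ j ∈ s, a j / (x + u j)) ^ 2
      = ∑ k ∈ s, (a k ^ 2 / (x + u k) ^ 2
          + 2 * (a k / (x + u k)) * ∑ j ∈ s.erase k, a j / (u j - u k)) := by
  set e : ι → ι → K := fun k j => a k / (x + u k) * (a j / (u j - u k))
  -- `1 / ((x + u k) (x + u j)) = (1 / (x + u k) - 1 / (x + u j)) / (u j - u k)`
  have hpair : ∀ k ∈ s, ∀ j ∈ s.erase k,
      a k / (x + u k) * (a j / (x + u j)) = e k j + e j k := by
    intro k hk j hj
    obtain ⟨hjk, hj⟩ := mem_erase.1 hj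
    have hjk' : u j - u k ≠ 0 := sub_ne_zero.2 fun h => hjk (hu hj hk h)
    have hkj' : u k - u j ≠ 0 := sub_ne_zero.2 fun h => hjk (hu hk hj h).symm
    simp only [e]
    field_simp [hx k hk, hx j hj]
    ring
  have hswap : ∑ k ∈ s, ∑ j ∈ s.erase k, e j k = ∑ k ∈ s, ∑ j ∈ s.erase k, e k j :=
    sum_comm' fun k j => by simp only [mem_erase]; tauto
  calc (∑ j ∈ s, a j / (x + u j)) ^ 2
      = ∑ k ∈ s, (a k / (x + u k) * (a k / (x + u k))
          + ∑ j ∈ s.erase k, a k / (x + u k) * (a j / (x + u j))) := by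
        rw [sq, sum_mul_sum]
        exact sum_congr rfl fun k hk => (add_sum_erase s _ hk).symm
    _ = ∑ k ∈ s, (a k / (x + u k) * (a k / (x + u k)) + ∑ j ∈ s.erase k, (e k j + e j k)) :=
        sum_congr rfl fun k hk => by rw [sum_congr rfl (hpair k hk)]
    _ = _ := by
        simp only [sum_add_distrib, hswap, e, ← mul_sum]
        rw [← sum_add_distrib, ← sum_add_distrib, ← sum_add_distrib]
        exact sum_congr rfl fun k _ => by rw [← div_pow]; ring

theorem hasDerivAt_prod_add {𝕜 ι : Type*} [NontriviallyNormedField 𝕜] (s : Finset ι) (u : ι → 𝕜)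
    {x : 𝕜} (hx : ∀ i ∈ s, x + u i ≠ 0) :
    HasDerivAt (fun y => ∏ i ∈ s, (y + u i)) ((∏ i ∈ s, (x + u i)) * ∑ i ∈ s, 1 / (x + u i)) x := by
  classical
  refine (HasDerivAt.fun_finsetProd (u := s) (f := fun i y => y + u i)
    fun i _ => (hasDerivAt_id x).add_const (u i)).congr_deriv ?_
  rw [mul_sum]
  refine sum_congr rfl fun i hi => ?_
  rw [← prod_erase_mul s _ hi, smul_eq_mul, mul_one, mul_assoc, mul_one_div_cancel (hx i hi), mul_one]

theorem sum_erase_div_sub_eq_of_eq_sum_div {𝕜 ι : Type*} [NontriviallyNormedField 𝕜]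
    [DecidableEq ι] {s : Finset ι} {u : ι → 𝕜} (hu : Set.InjOn u s) {c : 𝕜} {a : ι → 𝕜}
    (hF : ∀ x, (∀ i ∈ s, x + u i ≠ 0) → c / ∏ i ∈ s, (x + u i) = ∑ j ∈ s, a j / (x + u j))
    {k : ι} (hk : k ∈ s) :
    ∑ j ∈ s.erase k, a j / (u j - u k) = -a k * ∑ i ∈ s.erase k, 1 / (u i - u k) := by
  set x₀ := -u k
  set P : 𝕜 → 𝕜 := fun y => ∏ i ∈ s.erase k, (y + u i)
  set S : 𝕜 → 𝕜 := fun y => ∑ j ∈ s.erase k, a j / (y + u j)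
  -- `H y = (y + u k) * c / ∏ i ∈ s, (y + u i)`, continued across the pole at `x₀`
  set H : 𝕜 → 𝕜 := fun y => a k + (y + u k) * S y
  have hx₀ : ∀ i, x₀ + u i = u i - u k := fun i => neg_add_eq_sub _ _
  have hP₀ : ∀ i ∈ s.erase k, x₀ + u i ≠ 0 := fun i hi => by
    rw [hx₀, sub_ne_zero]
    exact fun h => (mem_erase.1 hi).1 (hu (mem_erase.1 hi).2 hk h)
  have hnear : ∀ᶠ y in 𝓝 x₀, ∀ i ∈ s.erase k, y + u i ≠ 0 :=
    (eventually_all_finset _).2 fun i hi =>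
      (continuous_add_const (u i)).continuousAt.eventually_ne (hP₀ i hi)
  have hP := hasDerivAt_prod_add (s.erase k) u hP₀
  have hS : DifferentiableAt 𝕜 S x₀ :=
    DifferentiableAt.fun_sum fun j hj =>
      (differentiableAt_const _).div (differentiableAt_id.add_const _) (hP₀ j hj)
  have hH : HasDerivAt H (S x₀) x₀ := by
    refine (((hasDerivAt_id x₀).add_const (u k)).mul hS.hasDerivAt |>.const_add (a k)).congr_deriv ?_
    simp [x₀]
  have hHP : (fun y => H y * P y) =ᶠ[𝓝 x₀] fun _ => c := by
    refine (ContinuousAt.eventuallyEq_nhds_iff_eventuallyEq_nhdsNE (f := fun y => H y * P y)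
      (hH.continuousAt.mul hP.continuousAt) continuousAt_const).1 ?_
    filter_upwards [nhdsWithin_le_nhds hnear, self_mem_nhdsWithin] with y hy hyx₀
    have hyk : y + u k ≠ 0 := fun h => hyx₀ (eq_neg_of_add_eq_zero_left h)
    have hys : ∀ i ∈ s, y + u i ≠ 0 := fun i hi => by
      rcases eq_or_ne i k with rfl | hik
      · exact hyk
      · exact hy i (mem_erase.2 ⟨hik, hi⟩)
    have hFy := hF y hys
    rw [← mul_prod_erase s _ hk, ← add_sum_erase s _ hk,
      div_eq_iff (mul_ne_zero hyk (prod_ne_zero_iff.2 hy))] at hFy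
    rw [hFy]
    simp only [H, S, P]
    field_simp
  have hderiv := (hH.mul hP).unique ((hasDerivAt_const x₀ c).congr_of_eventuallyEq hHP)
  have hHx₀ : H x₀ = a k := by simp [H, hx₀]
  have hPx₀ : ∏ i ∈ s.erase k, (u i - u k) ≠ 0 := by simpa only [hx₀] using prod_ne_zero_iff.2 hP₀
  rw [hHx₀] at hderiv
  simp only [S, hx₀] at hderiv
  apply mul_right_cancel₀ hPx₀
  linear_combination hderiv

theorem sum_erase_range_one_div_sub {K : Type*} [Field K] {n k : ℕ} (hk : k ≤ n) :
    ∑ i ∈ (range (n + 1)).erase k, 1 / ((i : K) - k)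
      = ∑ i ∈ range (n - k), 1 / ((i : K) + 1) - ∑ i ∈ range k, 1 / ((i : K) + 1) := by
  obtain ⟨m, rfl⟩ := Nat.exists_eq_add_of_le hk
  rw [sum_erase _ (by simp), add_right_comm, sum_range_add, sum_range_succ, ← sum_range_reflect,
    Nat.add_sub_cancel_left, sub_self, div_zero, add_zero, add_comm, sub_eq_add_neg,
    ← sum_neg_distrib]
  congr 1 <;> refine sum_congr rfl fun i hi => ?_
  · push_cast
    ring_nf
  · rw [Nat.sub_sub, Nat.cast_sub (by simp at hi; omega), ← one_div_neg_eq_neg_one_div]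
    push_cast
    ring_nf

theorem partial_fraction_Rn_general (n : ℕ) (t : ℝ) (ht : 0 < t) :
    ((n.factorial : ℝ) / ∏ i ∈ Finset.range (n + 1), (t + i)) ^ 2
      = ∑ k ∈ Finset.range (n + 1),
          ((n.choose k : ℝ) ^ 2 / (t + k) ^ 2
            + 2 * (n.choose k : ℝ) ^ 2
                * ((∑ i ∈ Finset.range k, (1 : ℝ) / (i + 1))
                    - ∑ i ∈ Finset.range (n - k), (1 : ℝ) / (i + 1)) / (t + k)) := by
  have ht' : ∀ i ∈ range (n + 1), t + (i : ℝ) ≠ 0 := fun i _ => by positivity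
  have hinj : Set.InjOn (Nat.cast : ℕ → ℝ) (range (n + 1)) := Nat.cast_injective.injOn
  rw [factorial_div_prod_add_eq_sum n ht', sq_sum_div_add_eq hinj _ ht']
  refine sum_congr rfl fun k hk => ?_
  rw [sum_erase_div_sub_eq_of_eq_sum_div hinj (fun x hx => factorial_div_prod_add_eq_sum n hx) hk,
    sum_erase_range_one_div_sub (Nat.lt_succ_iff.1 (mem_range.1 hk))]
  rcases neg_one_pow_eq_or ℝ k with hsign | hsign <;> rw [hsign] <;> ring

theorem partial_fraction_Rn (n : ℕ) (hn : 1 ≤ n) (t : ℝ) (ht : 0 < t) :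
    ((n.factorial : ℝ) / ∏ i ∈ Finset.range (n + 1), (t + i)) ^ 2
      = ∑ k ∈ Finset.range (n + 1),
          ((n.choose k : ℝ) ^ 2 / (t + k) ^ 2
            + 2 * (n.choose k : ℝ) ^ 2
                * ((∑ i ∈ Finset.range k, (1 : ℝ) / (i + 1))
                    - ∑ i ∈ Finset.range (n - k), (1 : ℝ) / (i + 1)) / (t + k)) :=
  partial_fraction_Rn_general n t ht
end

section
/- Fix n ≥ 1 and real numbers B_{k2}, B_{k1} (0 ≤ k ≤ n) with Σ_{k=0}^n B_{k1} = 0 and Σ_{k=0}^n (B_{k2} − k·B_{k1}) = 0. Let R(t) = Σ_{k=0}^n ( B_{k2}/(t+k)² + B_{k1}/(t+k) ). Then Σ_{ν=n+1}^∞ ∫_ν^∞ R(t) dt = B·γ + L − A, where B = Σ_{k=0}^n B_{k2}, L = Σ_{m=1}^n Σ_{k=m}^n B_{k1}·log(n+m), and A = Σ_{k=0}^n B_{k2}·H_{n+k}. -/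
/-!
Because `∑ₖ B_{k1} = 0`, the integrand has the primitive `∑ₖ (-B_{k2}/(t+k) + B_{k1} log (t+k))`,
which tends to `0`, so `∫_a^∞ R = ∑ₖ (B_{k2}/(a+k) - B_{k1} (log (a+k) - log a))`. Expanding in
`1/a`, the second relation kills the `1/a` term, so these tails are `O(a⁻²)` and the series
converges absolutely. Its `N`-th partial sum telescopes into shifted harmonic numbers and finitely
many logarithms; subtracting the vanishing `(∑ₖ (B_{k2} - k B_{k1})) log N` and using
`H_{N+c} - log N → γ`, `log (N + c) - log N → 0` gives the limit.
-/

open Finset MeasureTheory Filter Real Topology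

theorem Finset.sum_range_sub_shift {M : Type*} [AddCommGroup M] (g : ℕ → M) (k N : ℕ) :
    ∑ ν ∈ range N, (g (ν + k) - g ν) = ∑ j ∈ range k, (g (N + j) - g j) := by
  have hk : ∑ ν ∈ range N, g (k + ν) = ∑ i ∈ range (k + N), g i - ∑ i ∈ range k, g i :=
    eq_sub_of_add_eq' (sum_range_add g k N).symm
  have hN : ∑ j ∈ range k, g (N + j) = ∑ i ∈ range (N + k), g i - ∑ i ∈ range N, g i :=
    eq_sub_of_add_eq' (sum_range_add g N k).symm
  simp only [sum_sub_distrib, add_comm _ k, hk, hN]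
  abel

lemma abs_inv_add_sub_inv_le {a c : ℝ} (ha : 0 < a) (hc : 0 ≤ c) :
    |(a + c)⁻¹ - a⁻¹| ≤ c / a ^ 2 := by
  have h : (a + c)⁻¹ - a⁻¹ = -(c / (a * (a + c))) := by field_simp; ring
  rw [h, abs_neg, abs_of_nonneg (by positivity)]
  exact div_le_div_of_nonneg_left hc (by positivity) (by nlinarith)

lemma abs_log_one_add_sub_self_le {x : ℝ} (hx : 0 ≤ x) : |log (1 + x) - x| ≤ x ^ 2 := by
  have hup : log (1 + x) ≤ x := by linarith [log_le_sub_one_of_pos (by linarith : 0 < 1 + x)]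
  have hlow : x - x ^ 2 ≤ 2 * x / (x + 2) := by
    rw [le_div_iff₀ (by linarith)]; nlinarith [pow_nonneg hx 3]
  rw [abs_le]; constructor <;> nlinarith [le_log_one_add_of_nonneg hx]

lemma harmonic_add_sub (c N : ℕ) :
    (harmonic (c + N) : ℝ) - harmonic c = ∑ ν ∈ range N, ((c : ℝ) + ν + 1)⁻¹ := by
  simp [harmonic, sum_range_add]

lemma sum_range_one_div_eq_harmonic (j : ℕ) :
    ∑ i ∈ range j, (1 : ℝ) / (i + 1) = harmonic j := by
  simp [harmonic]

lemma tendsto_harmonic_add_sub_log (c : ℕ) :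
    Tendsto (fun N : ℕ => (harmonic (c + N) : ℝ) - log N) atTop (𝓝 eulerMascheroniConstant) := by
  have h := (tendsto_harmonic_sub_log_add_one.comp (tendsto_add_atTop_nat c)).add
    ((tendsto_log_comp_add_sub_log (c + 1)).comp tendsto_natCast_atTop_atTop)
  rw [add_zero] at h
  refine h.congr fun N => ?_
  simp only [Function.comp_apply]
  push_cast
  ring_nf

lemma integrableOn_Ioi_inv_add_sq_and_integral {a c : ℝ} (hac : 0 < a + c) :
    IntegrableOn (fun t => ((t + c) ^ 2)⁻¹) (Set.Ioi a) ∧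
      ∫ t in Set.Ioi a, ((t + c) ^ 2)⁻¹ = (a + c)⁻¹ := by
  have hderiv : ∀ t ∈ Set.Ici a, HasDerivAt (fun t => -(t + c)⁻¹) ((t + c) ^ 2)⁻¹ t := by
    intro t ht
    have htc : 0 < t + c := by have : a ≤ t := ht; linarith
    exact (((hasDerivAt_id' t).add_const c).fun_inv htc.ne').fun_neg.congr_deriv (by ring)
  have hnonneg : ∀ t ∈ Set.Ioi a, 0 ≤ ((t + c) ^ 2)⁻¹ := fun t _ => by positivity
  have hlim : Tendsto (fun t => -(t + c)⁻¹) atTop (𝓝 0) := by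
    simpa using (tendsto_inv_atTop_zero.comp (tendsto_atTop_add_const_right atTop c tendsto_id)).neg
  refine ⟨integrableOn_Ioi_deriv_of_nonneg' hderiv hnonneg hlim, ?_⟩
  rw [integral_Ioi_of_hasDerivAt_of_nonneg' hderiv hnonneg hlim]
  simp

lemma integrableOn_Ioi_inv_sub_inv_add_and_integral {a c : ℝ} (ha : 0 < a) (hc : 0 ≤ c) :
    IntegrableOn (fun t => t⁻¹ - (t + c)⁻¹) (Set.Ioi a) ∧
      ∫ t in Set.Ioi a, (t⁻¹ - (t + c)⁻¹) = log (a + c) - log a := by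
  have hderiv : ∀ t ∈ Set.Ici a,
      HasDerivAt (fun t => log t - log (t + c)) (t⁻¹ - (t + c)⁻¹) t := by
    intro t ht
    have ht0 : 0 < t := ha.trans_le ht
    simpa using (hasDerivAt_log ht0.ne').fun_sub
      (((hasDerivAt_id' t).add_const c).log (by linarith))
  have hnonneg : ∀ t ∈ Set.Ioi a, 0 ≤ t⁻¹ - (t + c)⁻¹ := fun t ht => by
    have ht0 : 0 < t := ha.trans ht
    exact sub_nonneg.2 (inv_anti₀ ht0 (by linarith))
  have hlim : Tendsto (fun t => log t - log (t + c)) atTop (𝓝 0) := by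
    simpa using (tendsto_log_comp_add_sub_log c).neg
  refine ⟨integrableOn_Ioi_deriv_of_nonneg' hderiv hnonneg hlim, ?_⟩
  rw [integral_Ioi_of_hasDerivAt_of_nonneg' hderiv hnonneg hlim]
  ring

noncomputable def tailClosedForm (s : Finset ℕ) (B2 B1 : ℕ → ℝ) (a : ℝ) : ℝ :=
  ∑ k ∈ s, (B2 k / (a + k) - B1 k * (log (a + k) - log a))

section TailClosedForm

variable {s : Finset ℕ} {B2 B1 : ℕ → ℝ}

theorem integral_Ici_eq_tailClosedForm (h1 : ∑ k ∈ s, B1 k = 0) {a : ℝ} (ha : 0 < a) :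
    ∫ t in Set.Ici a, ∑ k ∈ s, (B2 k / (t + k) ^ 2 + B1 k / (t + k))
      = tailClosedForm s B2 B1 a := by
  have hsplit : ∀ t ∈ Set.Ioi a, ∑ k ∈ s, (B2 k / (t + k) ^ 2 + B1 k / (t + k))
      = ∑ k ∈ s, (B2 k * ((t + k) ^ 2)⁻¹ - B1 k * (t⁻¹ - (t + k)⁻¹)) := by
    intro t _
    have hzero : ∑ k ∈ s, B1 k * t⁻¹ = 0 := by rw [← sum_mul, h1, zero_mul]
    rw [← sub_eq_zero, ← sum_sub_distrib, ← hzero]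
    exact sum_congr rfl fun k _ => by ring
  have hsq (k : ℕ) := integrableOn_Ioi_inv_add_sq_and_integral (a := a) (c := k) (by positivity)
  have hlog (k : ℕ) := integrableOn_Ioi_inv_sub_inv_add_and_integral ha (Nat.cast_nonneg k)
  rw [integral_Ici_eq_integral_Ioi, setIntegral_congr_fun measurableSet_Ioi hsplit,
    integral_finsetSum _ fun k _ => ((hsq k).1.const_mul (B2 k)).sub' ((hlog k).1.const_mul (B1 k))]
  refine sum_congr rfl fun k _ => ?_
  rw [integral_sub ((hsq k).1.const_mul _) ((hlog k).1.const_mul _), integral_const_mul,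
    integral_const_mul, (hsq k).2, (hlog k).2, div_eq_mul_inv]

theorem abs_tailClosedForm_le (h2 : ∑ k ∈ s, (B2 k - k * B1 k) = 0) {a : ℝ} (ha : 0 < a) :
    |tailClosedForm s B2 B1 a| ≤ (∑ k ∈ s, (|B2 k| * k + |B1 k| * k ^ 2)) / a ^ 2 := by
  have hcenter : tailClosedForm s B2 B1 a
      = ∑ k ∈ s, (B2 k * ((a + k)⁻¹ - a⁻¹) - B1 k * (log (1 + k / a) - k / a)) := by
    have hzero : ∑ k ∈ s, (B2 k - k * B1 k) * a⁻¹ = 0 := by rw [← sum_mul, h2, zero_mul]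
    rw [tailClosedForm, ← sub_zero (∑ k ∈ s, _), ← hzero, ← sum_sub_distrib]
    refine sum_congr rfl fun k _ => ?_
    rw [← log_div (by positivity) ha.ne', add_div, div_self ha.ne']
    ring
  rw [hcenter, sum_div]
  refine (abs_sum_le_sum_abs _ _).trans (sum_le_sum fun k _ => ?_)
  have hk : (0 : ℝ) ≤ k := Nat.cast_nonneg k
  calc |B2 k * ((a + k)⁻¹ - a⁻¹) - B1 k * (log (1 + k / a) - k / a)|
      ≤ |B2 k| * |(a + k)⁻¹ - a⁻¹| + |B1 k| * |log (1 + k / a) - k / a| := by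
        rw [← abs_mul, ← abs_mul]; exact abs_sub _ _
    _ ≤ |B2 k| * (k / a ^ 2) + |B1 k| * (k / a) ^ 2 := by
        gcongr
        · exact abs_inv_add_sub_inv_le ha hk
        · exact abs_log_one_add_sub_self_le (by positivity)
    _ = (|B2 k| * k + |B1 k| * k ^ 2) / a ^ 2 := by ring

theorem summable_tailClosedForm (h2 : ∑ k ∈ s, (B2 k - k * B1 k) = 0) {a : ℝ} (ha : 0 < a) :
    Summable fun ν : ℕ => tailClosedForm s B2 B1 (a + ν) := by
  have hp : Summable fun ν : ℕ => 1 / |ν + a| ^ (2 : ℝ) :=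
    (summable_one_div_nat_add_rpow a 2).2 one_lt_two
  refine Summable.of_norm_bounded (hp.mul_left (∑ k ∈ s, (|B2 k| * k + |B1 k| * k ^ 2)))
    fun ν => ?_
  have haν : 0 < a + ν := by positivity
  rw [norm_eq_abs, add_comm (ν : ℝ), abs_of_pos haν, rpow_two]
  exact (abs_tailClosedForm_le h2 haν).trans_eq (by ring)

theorem sum_range_tailClosedForm (m N : ℕ) :
    ∑ ν ∈ range N, tailClosedForm s B2 B1 ((m : ℝ) + 1 + ν)
      = ∑ k ∈ s, (B2 k * (harmonic (m + k + N) - harmonic (m + k))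
          - B1 k * ∑ j ∈ range k, (log ((m : ℝ) + 1 + N + j) - log ((m : ℝ) + 1 + j))) := by
  simp only [tailClosedForm]
  rw [sum_comm]
  refine sum_congr rfl fun k _ => ?_
  have htel := sum_range_sub_shift (fun ν : ℕ => log ((m : ℝ) + 1 + ν)) k N
  simp only [Nat.cast_add, ← add_assoc] at htel
  rw [sum_sub_distrib, ← mul_sum, htel, harmonic_add_sub]
  congr 1
  rw [mul_sum]
  exact sum_congr rfl fun ν _ => by push_cast; ring

theorem tendsto_sum_range_tailClosedForm (h2 : ∑ k ∈ s, (B2 k - k * B1 k) = 0) (m : ℕ) :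
    Tendsto (fun N : ℕ => ∑ ν ∈ range N, tailClosedForm s B2 B1 ((m : ℝ) + 1 + ν)) atTop
      (𝓝 ((∑ k ∈ s, B2 k) * eulerMascheroniConstant
        + ∑ k ∈ s, B1 k * ∑ j ∈ range k, log ((m : ℝ) + 1 + j)
        - ∑ k ∈ s, B2 k * harmonic (m + k))) := by
  have hdecomp (N : ℕ) : ∑ ν ∈ range N, tailClosedForm s B2 B1 ((m : ℝ) + 1 + ν)
      = ∑ k ∈ s, (B2 k * (harmonic (m + k + N) - log N)
          - B1 k * ∑ j ∈ range k, (log ((m : ℝ) + 1 + N + j) - log N))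
        + (∑ k ∈ s, B1 k * ∑ j ∈ range k, log ((m : ℝ) + 1 + j)
          - ∑ k ∈ s, B2 k * harmonic (m + k)) := by
    have hzero : ∑ k ∈ s, (B2 k - k * B1 k) * log N = 0 := by rw [← sum_mul, h2, zero_mul]
    rw [sum_range_tailClosedForm, ← sum_sub_distrib, ← sum_add_distrib, ← sub_eq_zero, ← hzero,
      ← sum_sub_distrib]
    refine sum_congr rfl fun k _ => ?_
    simp only [sum_sub_distrib, sum_const, card_range, nsmul_eq_mul]
    ring
  have hlog (j : ℕ) : Tendsto (fun N : ℕ => log ((m : ℝ) + 1 + N + j) - log N) atTop (𝓝 0) :=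
    ((tendsto_log_comp_add_sub_log (m + 1 + j)).comp tendsto_natCast_atTop_atTop).congr
      fun N => by rw [Function.comp_apply, add_comm (N : ℝ), add_right_comm _ (N : ℝ)]
  have hlim := (tendsto_finsetSum s fun k _ =>
    ((tendsto_harmonic_add_sub_log (m + k)).const_mul (B2 k)).sub
      ((tendsto_finsetSum (range k) fun j _ => hlog j).const_mul (B1 k))).add_const
    (∑ k ∈ s, B1 k * ∑ j ∈ range k, log ((m : ℝ) + 1 + j) - ∑ k ∈ s, B2 k * harmonic (m + k))
  simp only [sum_const_zero, mul_zero, sub_zero, ← sum_mul] at hlim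
  rw [add_sub_assoc]
  exact hlim.congr fun N => (hdecomp N).symm

end TailClosedForm

lemma sum_mul_sum_range_log_eq (n : ℕ) (B1 : ℕ → ℝ) :
    ∑ k ∈ range (n + 1), B1 k * ∑ j ∈ range k, log ((n : ℝ) + 1 + j)
      = ∑ m ∈ Icc 1 n, ∑ k ∈ Icc m n, B1 k * log (n + m) := by
  have hshift (k : ℕ) : ∑ j ∈ range k, log ((n : ℝ) + 1 + j) = ∑ m ∈ Icc 1 k, log (n + m) := by
    rw [range_eq_Ico, ← Ico_add_one_right_eq_Icc, ← sum_Ico_add' _ 0 k 1]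
    exact sum_congr rfl fun j _ => by push_cast; ring_nf
  simp_rw [hshift, mul_sum]
  exact sum_comm' fun k m => by simp only [mem_range, mem_Icc]; omega

theorem series_eq_linear_form_general (n : ℕ)
    (B2 B1 : ℕ → ℝ)
    (h1 : ∑ k ∈ Finset.range (n + 1), B1 k = 0)
    (h2 : ∑ k ∈ Finset.range (n + 1), (B2 k - (k : ℝ) * B1 k) = 0)
    (R : ℝ → ℝ)
    (hR : ∀ t : ℝ, R t = ∑ k ∈ Finset.range (n + 1),
        (B2 k / (t + k) ^ 2 + B1 k / (t + k))) :
    (∑' ν : ℕ, ∫ t in Set.Ici ((n : ℝ) + 1 + ν), R t)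
      = (∑ k ∈ Finset.range (n + 1), B2 k) * Real.eulerMascheroniConstant
        + (∑ m ∈ Finset.Icc 1 n, ∑ k ∈ Finset.Icc m n, B1 k * Real.log (n + m))
        - ∑ k ∈ Finset.range (n + 1),
            B2 k * ∑ i ∈ Finset.range (n + k), (1 : ℝ) / (i + 1) := by
  obtain rfl : R = fun t => ∑ k ∈ range (n + 1), (B2 k / (t + k) ^ 2 + B1 k / (t + k)) :=
    funext hR
  have hint (ν : ℕ) : ∫ t in Set.Ici ((n : ℝ) + 1 + ν), ∑ k ∈ range (n + 1),
      (B2 k / (t + k) ^ 2 + B1 k / (t + k)) = tailClosedForm (range (n + 1)) B2 B1 (n + 1 + ν) :=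
    integral_Ici_eq_tailClosedForm h1 (by positivity)
  rw [tsum_congr hint]
  refine tendsto_nhds_unique (summable_tailClosedForm h2 (by positivity)).hasSum.tendsto_sum_nat ?_
  simp_rw [sum_range_one_div_eq_harmonic, ← sum_mul_sum_range_log_eq]
  exact tendsto_sum_range_tailClosedForm h2 n

theorem series_eq_linear_form (n : ℕ) (hn : 1 ≤ n)
    (B2 B1 : ℕ → ℝ)
    (h1 : ∑ k ∈ Finset.range (n + 1), B1 k = 0)
    (h2 : ∑ k ∈ Finset.range (n + 1), (B2 k - (k : ℝ) * B1 k) = 0)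
    (R : ℝ → ℝ)
    (hR : ∀ t : ℝ, R t = ∑ k ∈ Finset.range (n + 1),
        (B2 k / (t + k) ^ 2 + B1 k / (t + k))) :
    (∑' ν : ℕ, ∫ t in Set.Ici ((n : ℝ) + 1 + ν), R t)
      = (∑ k ∈ Finset.range (n + 1), B2 k) * Real.eulerMascheroniConstant
        + (∑ m ∈ Finset.Icc 1 n, ∑ k ∈ Finset.Icc m n, B1 k * Real.log (n + m))
        - ∑ k ∈ Finset.range (n + 1),
            B2 k * ∑ i ∈ Finset.range (n + k), (1 : ℝ) / (i + 1) :=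
  series_eq_linear_form_general n B2 B1 h1 h2 R hR
end

section
/- For every integer n ≥ 1, the double integral over the open unit square of (x(1−x)y(1−y))^n / ((1−xy)(−log(xy))) dx dy equals Σ_{k=0}^∞ ∫_k^∞ (n!/((t+n+1)(t+n+2)⋯(t+2n+1)))² dt. -/
/-!
For `x, y ∈ (0, 1)` put `r = x y`. Expanding `1 / (1 - r) = ∑ₖ rᵏ` and writing
`rᵏ / (-log r) = ∫_k^∞ rᵗ dt`, the integrand becomes `∑ₖ ∫_k^∞ φ(x, t) φ(y, t) dt` with
`φ(u, t) = uᵗ (u (1 - u))ⁿ`. Everything is nonnegative, so by Tonelli the `x`- and `y`-integrals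
may be taken first, and each is the Beta integral
`∫₀¹ u^(t+n) (1 - u)ⁿ du = n! / ((t + n + 1) ⋯ (t + 2n + 1))`.
For `n ≥ 1` the integrand is at most `1`, so both sides are finite and the identity of
`ℝ≥0∞`-valued integrals descends to real numbers.
-/

open MeasureTheory Set Filter
open scoped ENNReal Nat

theorem integral_rpow_mul_one_sub_pow {a : ℝ} (ha : -1 < a) (n : ℕ) :
    ∫ u in (0 : ℝ)..1, u ^ a * (1 - u) ^ n = n ! / ∏ i ∈ Finset.range (n + 1), (a + 1 + i) := by
  have h := Complex.betaIntegral_eval_nat_add_one_right (u := a + 1)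
    (by rw [← Complex.ofReal_one, ← Complex.ofReal_add, Complex.ofReal_re]; linarith) n
  apply Complex.ofReal_injective
  rw [← intervalIntegral.integral_ofReal]
  push_cast
  rw [← h, Complex.betaIntegral]
  refine intervalIntegral.integral_congr fun u hu => ?_
  rw [uIcc_of_le zero_le_one] at hu
  simp only [add_sub_cancel_right, Complex.cpow_natCast, Complex.ofReal_cpow hu.1]

theorem lintegral_Ioo_rpow_mul_one_sub_pow {a : ℝ} (ha : -1 < a) (n : ℕ) :
    ∫⁻ u in Ioo 0 1, ENNReal.ofReal (u ^ a * (1 - u) ^ n)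
      = ENNReal.ofReal (n ! / ∏ i ∈ Finset.range (n + 1), (a + 1 + i)) := by
  have hint : IntervalIntegrable (fun u : ℝ => u ^ a * (1 - u) ^ n) volume 0 1 :=
    (intervalIntegral.intervalIntegrable_rpow' ha).mul_continuousOn (by fun_prop)
  rw [intervalIntegrable_iff_integrableOn_Ioo_of_le zero_le_one] at hint
  rw [← integral_rpow_mul_one_sub_pow ha, intervalIntegral.integral_of_le zero_le_one,
    integral_Ioc_eq_integral_Ioo, ofReal_integral_eq_lintegral_ofReal hint]
  filter_upwards [ae_restrict_mem measurableSet_Ioo] with u hu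
  exact mul_nonneg (Real.rpow_nonneg hu.1.le a) (pow_nonneg (sub_nonneg.2 hu.2.le) n)

theorem lintegral_Ioo_rpow_mul_mul_one_sub_pow (n : ℕ) {t : ℝ} (ht : -1 < t + n) :
    ∫⁻ u in Ioo 0 1, ENNReal.ofReal (u ^ t * (u * (1 - u)) ^ n)
      = ENNReal.ofReal (n ! / ∏ i ∈ Finset.range (n + 1), (t + n + 1 + i)) := by
  rw [← lintegral_Ioo_rpow_mul_one_sub_pow ht n]
  refine setLIntegral_congr_fun measurableSet_Ioo fun u hu => ?_
  rw [Real.rpow_add hu.1, Real.rpow_natCast, mul_pow, mul_assoc]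

theorem lintegral_Ici_rpow_of_lt_one {r : ℝ} (h0 : 0 < r) (h1 : r < 1) (c : ℝ) :
    ∫⁻ t in Ici c, ENNReal.ofReal (r ^ t) = ENNReal.ofReal (r ^ c / -Real.log r) := by
  have hlog := Real.log_neg h0 h1
  have hexp : (fun t => r ^ t) = fun t => Real.exp (Real.log r * t) := by
    ext t; rw [Real.rpow_def_of_pos h0]
  have hint : IntegrableOn (fun t => r ^ t) (Ici c) := by
    rw [integrableOn_Ici_iff_integrableOn_Ioi, hexp]
    exact integrableOn_exp_mul_Ioi hlog c
  rw [← ofReal_integral_eq_lintegral_ofReal hint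
      (Eventually.of_forall fun t => Real.rpow_nonneg h0.le t),
    integral_Ici_eq_integral_Ioi, hexp, integral_exp_mul_Ioi hlog, Real.rpow_def_of_pos h0,
    neg_div, div_neg]

/-- Packing the sum over `k` into one s-finite measure lets Tonelli exchange it together with the
`t`-integral. -/
noncomputable def tailsMeasure : Measure ℝ :=
  Measure.sum fun k : ℕ => volume.restrict (Ici (k : ℝ))

instance : SFinite tailsMeasure := by
  unfold tailsMeasure; infer_instance

theorem lintegral_tailsMeasure (h : ℝ → ℝ≥0∞) :
    ∫⁻ t, h t ∂tailsMeasure = ∑' k : ℕ, ∫⁻ t in Ici (k : ℝ), h t :=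
  lintegral_sum_measure h _

theorem ae_tailsMeasure_nonneg : ∀ᵐ t ∂tailsMeasure, 0 ≤ t := by
  rw [tailsMeasure, Measure.ae_sum_iff' measurableSet_Ici]
  exact fun k => (ae_restrict_mem measurableSet_Ici).mono fun t ht => (Nat.cast_nonneg k).trans ht

theorem lintegral_tailsMeasure_rpow {r : ℝ} (h0 : 0 < r) (h1 : r < 1) :
    ∫⁻ t, ENNReal.ofReal (r ^ t) ∂tailsMeasure = ENNReal.ofReal (((1 - r) * -Real.log r)⁻¹) := by
  have hlog : 0 < -Real.log r := neg_pos.2 (Real.log_neg h0 h1)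
  simp_rw [lintegral_tailsMeasure, lintegral_Ici_rpow_of_lt_one h0 h1, Real.rpow_natCast]
  rw [← ENNReal.ofReal_tsum_of_nonneg (fun k => by positivity)
      ((summable_geometric_of_lt_one h0.le h1).div_const _),
    tsum_div_const, tsum_geometric_of_lt_one h0.le h1, mul_inv, div_eq_mul_inv]

section

variable {α β : Type*} [MeasurableSpace α] [MeasurableSpace β] {μ : Measure α} {ν : Measure β}
  [SFinite ν]

theorem lintegral_lintegral_lintegral_mul_eq_lintegral_sq [SFinite μ] {g : α → β → ℝ≥0∞}
    (hg : Measurable (Function.uncurry g)) :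
    ∫⁻ x, ∫⁻ y, ∫⁻ t, g x t * g y t ∂ν ∂μ ∂μ = ∫⁻ t, (∫⁻ x, g x t ∂μ) ^ 2 ∂ν := by
  have hG : Measurable fun t => ∫⁻ x, g x t ∂μ := hg.lintegral_prod_left'
  have hinner (x : α) : ∫⁻ y, ∫⁻ t, g x t * g y t ∂ν ∂μ = ∫⁻ t, g x t * ∫⁻ y, g y t ∂μ ∂ν := by
    rw [lintegral_lintegral_swap
      ((hg.comp (measurable_const.prodMk measurable_snd)).mul hg).aemeasurable]
    exact lintegral_congr fun t =>
      lintegral_const_mul (f := fun y => g y t) _ (hg.comp measurable_prodMk_right)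
  simp_rw [hinner]
  rw [lintegral_lintegral_swap (hg.mul (hG.comp measurable_snd)).aemeasurable]
  exact lintegral_congr fun t => by
    rw [lintegral_mul_const (f := fun x => g x t) _ (hg.comp measurable_prodMk_right), sq]

theorem integral_integral_eq_toReal_lintegral_lintegral {f : α → β → ℝ}
    (hf : Measurable (Function.uncurry f)) (h0 : ∀ᵐ x ∂μ, ∀ᵐ y ∂ν, 0 ≤ f x y)
    (hfin : ∫⁻ x, ∫⁻ y, ENNReal.ofReal (f x y) ∂ν ∂μ ≠ ∞) :
    ∫ x, ∫ y, f x y ∂ν ∂μ = (∫⁻ x, ∫⁻ y, ENNReal.ofReal (f x y) ∂ν ∂μ).toReal := by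
  have hF : Measurable fun x => ∫⁻ y, ENNReal.ofReal (f x y) ∂ν :=
    hf.ennreal_ofReal.lintegral_prod_right'
  calc ∫ x, ∫ y, f x y ∂ν ∂μ = ∫ x, (∫⁻ y, ENNReal.ofReal (f x y) ∂ν).toReal ∂μ := by
        refine integral_congr_ae (h0.mono fun x hx => ?_)
        exact integral_eq_lintegral_of_nonneg_ae hx
          (hf.comp measurable_prodMk_left).aestronglyMeasurable
    _ = _ := integral_toReal hF.aemeasurable (ae_lt_top hF hfin)

end

theorem ofReal_div_eq_lintegral_tailsMeasure (n : ℕ) {x y : ℝ} (hx : x ∈ Ioo 0 1)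
    (hy : y ∈ Ioo 0 1) :
    ENNReal.ofReal ((x * (1 - x) * y * (1 - y)) ^ n / ((1 - x * y) * -Real.log (x * y)))
      = ∫⁻ t, ENNReal.ofReal (x ^ t * (x * (1 - x)) ^ n)
          * ENNReal.ofReal (y ^ t * (y * (1 - y)) ^ n) ∂tailsMeasure := by
  have hxy : 0 < x * y := mul_pos hx.1 hy.1
  have hxy1 : x * y < 1 := by nlinarith [hx.1, hx.2, hy.1, hy.2]
  have hx' : 0 ≤ x * (1 - x) := mul_nonneg hx.1.le (sub_nonneg.2 hx.2.le)
  have hy' : 0 ≤ y * (1 - y) := mul_nonneg hy.1.le (sub_nonneg.2 hy.2.le)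
  have hA : 0 ≤ x * (1 - x) * y * (1 - y) := by rw [mul_assoc _ y]; exact mul_nonneg hx' hy'
  have hprod (t : ℝ) : ENNReal.ofReal (x ^ t * (x * (1 - x)) ^ n)
      * ENNReal.ofReal (y ^ t * (y * (1 - y)) ^ n)
        = ENNReal.ofReal ((x * (1 - x) * y * (1 - y)) ^ n) * ENNReal.ofReal ((x * y) ^ t) := by
    rw [← ENNReal.ofReal_mul (mul_nonneg (Real.rpow_nonneg hx.1.le t) (pow_nonneg hx' n)),
      ← ENNReal.ofReal_mul (pow_nonneg hA n), Real.mul_rpow hx.1.le hy.1.le,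
      show x * (1 - x) * y * (1 - y) = x * (1 - x) * (y * (1 - y)) by ring,
      mul_pow (x * (1 - x))]
    ring_nf
  simp_rw [hprod]
  rw [lintegral_const_mul _ (by fun_prop), lintegral_tailsMeasure_rpow hxy hxy1,
    ← ENNReal.ofReal_mul (pow_nonneg hA n), div_eq_mul_inv]

theorem lintegral_Ioo_lintegral_Ioo_eq_lintegral_tailsMeasure (n : ℕ) :
    ∫⁻ x in Ioo 0 1, ∫⁻ y in Ioo 0 1,
        ENNReal.ofReal ((x * (1 - x) * y * (1 - y)) ^ n / ((1 - x * y) * -Real.log (x * y)))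
      = ∫⁻ t, ENNReal.ofReal (((n ! : ℝ) / ∏ i ∈ Finset.range (n + 1), (t + n + 1 + i)) ^ 2)
          ∂tailsMeasure :=
  calc _ = ∫⁻ x in Ioo 0 1, ∫⁻ y in Ioo 0 1, ∫⁻ t,
        ENNReal.ofReal (x ^ t * (x * (1 - x)) ^ n)
          * ENNReal.ofReal (y ^ t * (y * (1 - y)) ^ n) ∂tailsMeasure :=
        setLIntegral_congr_fun measurableSet_Ioo fun x hx =>
          setLIntegral_congr_fun measurableSet_Ioo fun y hy =>
            ofReal_div_eq_lintegral_tailsMeasure n hx hy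
    _ = ∫⁻ t, (∫⁻ u in Ioo 0 1, ENNReal.ofReal (u ^ t * (u * (1 - u)) ^ n)) ^ 2
          ∂tailsMeasure :=
        lintegral_lintegral_lintegral_mul_eq_lintegral_sq (by fun_prop)
    _ = _ := lintegral_congr_ae <| ae_tailsMeasure_nonneg.mono fun t ht => by
        dsimp only
        rw [lintegral_Ioo_rpow_mul_mul_one_sub_pow n
            (by linarith [(n.cast_nonneg : (0 : ℝ) ≤ n)]),
          ← ENNReal.ofReal_pow (by positivity)]

theorem div_one_sub_mul_neg_log_nonneg (n : ℕ) {x y : ℝ} (hx : x ∈ Icc 0 1)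
    (hy : y ∈ Icc 0 1) :
    0 ≤ (x * (1 - x) * y * (1 - y)) ^ n / ((1 - x * y) * -Real.log (x * y)) := by
  obtain ⟨hx0, hx1⟩ := hx
  obtain ⟨hy0, hy1⟩ := hy
  have hxy1 : x * y ≤ 1 := mul_le_one₀ hx1 hy0 hy1
  refine div_nonneg (pow_nonneg ?_ n) (mul_nonneg (sub_nonneg.2 hxy1)
    (neg_nonneg.2 (Real.log_nonpos (mul_nonneg hx0 hy0) hxy1)))
  rw [mul_assoc _ y]
  exact mul_nonneg (mul_nonneg hx0 (sub_nonneg.2 hx1)) (mul_nonneg hy0 (sub_nonneg.2 hy1))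

theorem div_one_sub_mul_neg_log_le_one {n : ℕ} (hn : 1 ≤ n) {x y : ℝ} (hx : x ∈ Ioo 0 1)
    (hy : y ∈ Ioo 0 1) :
    (x * (1 - x) * y * (1 - y)) ^ n / ((1 - x * y) * -Real.log (x * y)) ≤ 1 := by
  obtain ⟨hx0, hx1⟩ := hx
  obtain ⟨hy0, hy1⟩ := hy
  have hxy : 0 < x * y := mul_pos hx0 hy0
  have hxy1 : x * y < 1 := by nlinarith
  have hP : 0 ≤ (1 - x) * (1 - y) := mul_nonneg (sub_nonneg.2 hx1.le) (sub_nonneg.2 hy1.le)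
  have hA_eq : x * (1 - x) * y * (1 - y) = x * y * ((1 - x) * (1 - y)) := by ring
  have hA0 : 0 ≤ x * (1 - x) * y * (1 - y) := hA_eq ▸ mul_nonneg hxy.le hP
  have hA : x * (1 - x) * y * (1 - y) ≤ (1 - x * y) ^ 2 :=
    calc x * (1 - x) * y * (1 - y) ≤ (1 - x) * (1 - y) := by
          rw [hA_eq]; exact mul_le_of_le_one_left hP hxy1.le
      _ ≤ (1 - x * y) * (1 - x * y) := by gcongr <;> nlinarith
      _ = (1 - x * y) ^ 2 := (sq _).symm
  have hA1 : x * (1 - x) * y * (1 - y) ≤ 1 :=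
    hA.trans (pow_le_one₀ (sub_nonneg.2 hxy1.le) (by linarith))
  have hD : (1 - x * y) ^ 2 ≤ (1 - x * y) * -Real.log (x * y) := by
    rw [sq]
    refine mul_le_mul_of_nonneg_left ?_ (sub_nonneg.2 hxy1.le)
    linarith [Real.log_le_sub_one_of_pos hxy]
  rw [div_le_one ((pow_pos (sub_pos.2 hxy1) 2).trans_le hD)]
  calc _ ≤ x * (1 - x) * y * (1 - y) := pow_le_of_le_one hA0 hA1 (by omega)
    _ ≤ (1 - x * y) ^ 2 := hA
    _ ≤ _ := hD

theorem double_integral_eq_shifted_series (n : ℕ) (hn : 1 ≤ n) :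
    (∫ x in (0:ℝ)..1, ∫ y in (0:ℝ)..1,
        (x * (1 - x) * y * (1 - y)) ^ n / ((1 - x * y) * (-Real.log (x * y))))
      = ∑' k : ℕ, ∫ t in Set.Ici (k : ℝ),
          ((n.factorial : ℝ) / ∏ i ∈ Finset.range (n + 1), (t + n + 1 + i)) ^ 2 := by
  have hlin := lintegral_Ioo_lintegral_Ioo_eq_lintegral_tailsMeasure n
  have hfin : ∫⁻ x in Ioo 0 1, ∫⁻ y in Ioo 0 1,
      ENNReal.ofReal ((x * (1 - x) * y * (1 - y)) ^ n / ((1 - x * y) * -Real.log (x * y))) ≠ ∞ := by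
    refine ne_top_of_le_ne_top (b := ∫⁻ _ in Ioo (0 : ℝ) 1, ∫⁻ _ in Ioo (0 : ℝ) 1, 1) (by simp) ?_
    refine setLIntegral_mono' measurableSet_Ioo fun x hx => ?_
    refine setLIntegral_mono' measurableSet_Ioo fun y hy => ?_
    exact ENNReal.ofReal_le_one.2 (div_one_sub_mul_neg_log_le_one hn hx hy)
  have hnonneg := (ae_restrict_mem (μ := volume) measurableSet_Ioo).mono fun x hx =>
    (ae_restrict_mem (μ := volume) measurableSet_Ioo).mono fun y hy =>
      div_one_sub_mul_neg_log_nonneg n (Ioo_subset_Icc_self hx) (Ioo_subset_Icc_self hy)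
  simp only [intervalIntegral.integral_of_le zero_le_one, integral_Ioc_eq_integral_Ioo]
  rw [integral_integral_eq_toReal_lintegral_lintegral (by fun_prop) hnonneg hfin, hlin,
    lintegral_tailsMeasure, ENNReal.tsum_toReal_eq]
  · exact tsum_congr fun k => (integral_eq_lintegral_of_nonneg_ae
      (Eventually.of_forall fun t => sq_nonneg _)
      (Measurable.aestronglyMeasurable (by fun_prop))).symm
  · rw [hlin, lintegral_tailsMeasure] at hfin
    exact ENNReal.ne_top_of_tsum_ne_top hfin
end
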